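/- arXiv:2412.12431 — 2 statements merged into one kernel-verified Lean document; each statement's English description precedes it below -/
import Mathlib

section
/- Let Q be the quiver with one vertex and r ≥ 2 loops, K algebraically closed, d ∈ ℕ, and L ≥ d. Then the variety rep_d(Λ_L) is irreducible. -/
variable (K : Type) [Field K] (r d : ℕ)

/-- Zariski-closed subsets of the space of `r`-tuples of `d×d` matrices: common zero sets of
families of polynomials in the matrix entries. -/
def ZClosed (S : Set (Fin r → Matrix (Fin d) (Fin d) K)) : Prop :=
  ∃ I : Set (MvPolynomial (Fin r × Fin d × Fin d) K),
    S = {X | ∀ f ∈ I, MvPolynomial.eval (fun v => X v.1 v.2.1 v.2.2) f = 0}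

/-- Irreducibility of a subset with respect to Zariski-closed coverings. -/
def ZIrred (C : Set (Fin r → Matrix (Fin d) (Fin d) K)) : Prop :=
  C.Nonempty ∧
    ∀ C₁ C₂, ZClosed K r d C₁ → ZClosed K r d C₂ → C ⊆ C₁ ∪ C₂ → C ⊆ C₁ ∨ C ⊆ C₂

/-!
Every tuple generating a nilpotent algebra is simultaneously strictly upper triangular in a
suitable basis: take a basis adapted to the flag of common kernels of the words of length
`k = 0, …, L`. Hence the variety is the image of the polynomial map
`(g, N) ↦ (g * N v * adjugate g)_v` on the affine space of pairs of a matrix `g` and a tuple `N`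
of strictly upper triangular matrices (the adjugate absorbs the scalar `det g`, so no inverse is
needed). The image of an affine space under a polynomial map over an infinite field is
irreducible, because the polynomial ring is a domain and a polynomial vanishing everywhere is `0`.
-/

open Matrix Submodule

def wordProd {M ι : Type*} [Monoid M] (T : ι → M) {k : ℕ} (w : Fin k → ι) : M :=
  (List.ofFn fun j => T (w j)).prod

section wordProd

variable {M N ι : Type*} [Monoid M] [Monoid N]

theorem wordProd_zero (T : ι → M) (w : Fin 0 → ι) : wordProd T w = 1 := by
  simp [wordProd]

theorem wordProd_cons (T : ι → M) {k : ℕ} (v : ι) (w : Fin k → ι) :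
    wordProd T (Fin.cons v w) = T v * wordProd T w := by
  simp [wordProd, List.ofFn_succ]

theorem wordProd_snoc (T : ι → M) {k : ℕ} (w : Fin k → ι) (v : ι) :
    wordProd T (Fin.snoc w v) = wordProd T w * T v := by
  rw [wordProd, wordProd, List.ofFn_succ', List.prod_concat]
  simp

theorem map_wordProd {F : Type*} [FunLike F M N] [MonoidHomClass F M N] (f : F) (T : ι → M)
    {k : ℕ} (w : Fin k → ι) : f (wordProd T w) = wordProd (f ∘ T) w := by
  simp [wordProd, map_list_prod, List.map_ofFn, Function.comp_def]

end wordProd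

namespace Matrix

variable {R : Type*} {n : ℕ}

def IsStrictUpperTriangular [Zero R] (M : Matrix (Fin n) (Fin n) R) : Prop :=
  ∀ i j, j ≤ i → M i j = 0

theorem IsStrictUpperTriangular.smul [Semiring R] {M : Matrix (Fin n) (Fin n) R}
    (hM : M.IsStrictUpperTriangular) (c : R) : (c • M).IsStrictUpperTriangular := by
  intro i j hji
  simp [hM i j hji]

theorem list_prod_apply_eq_zero_of_isStrictUpperTriangular [Semiring R]
    {l : List (Matrix (Fin n) (Fin n) R)} (hl : ∀ M ∈ l, M.IsStrictUpperTriangular)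
    {i j : Fin n} (hij : (j : ℕ) < i + l.length) : l.prod i j = 0 := by
  induction l generalizing i with
  | nil => exact one_apply_ne (by rintro rfl; simp at hij)
  | cons M t ih =>
    rw [List.prod_cons, mul_apply]
    refine Finset.sum_eq_zero fun k _ => ?_
    rcases le_or_gt k i with hki | hik
    · rw [hl M List.mem_cons_self i k hki, zero_mul]
    · rw [ih (fun M hM => hl M (List.mem_cons_of_mem _ hM)) (by simp at hij; omega), mul_zero]

theorem list_prod_eq_zero_of_isStrictUpperTriangular [Semiring R]
    {l : List (Matrix (Fin n) (Fin n) R)} (hl : ∀ M ∈ l, M.IsStrictUpperTriangular)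
    (hlen : n ≤ l.length) : l.prod = 0 :=
  ext fun _ j => list_prod_apply_eq_zero_of_isStrictUpperTriangular hl (by omega)

variable [CommRing R]

theorem mul_mul_adjugate_mul_mul_mul_adjugate (g A B : Matrix (Fin n) (Fin n) R) :
    (g * A * g.adjugate) * (g * B * g.adjugate) = g.det • (g * (A * B) * g.adjugate) := by
  calc (g * A * g.adjugate) * (g * B * g.adjugate)
      = g * A * (g.adjugate * g) * B * g.adjugate := by simp only [Matrix.mul_assoc]
    _ = g.det • (g * (A * B) * g.adjugate) := by
      rw [adjugate_mul, Matrix.mul_smul, mul_one, Matrix.smul_mul, Matrix.smul_mul]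
      simp only [Matrix.mul_assoc]

theorem list_prod_map_mul_mul_adjugate (g N : Matrix (Fin n) (Fin n) R)
    (l : List (Matrix (Fin n) (Fin n) R)) :
    ((N :: l).map fun M => g * M * g.adjugate).prod
      = g.det ^ l.length • (g * (N :: l).prod * g.adjugate) := by
  induction l generalizing N with
  | nil => simp
  | cons M l ih =>
    rw [List.map_cons, List.prod_cons, ih, mul_smul_comm, mul_mul_adjugate_mul_mul_mul_adjugate,
      smul_smul, ← pow_succ]
    simp only [List.length_cons, List.prod_cons]

theorem list_prod_map_mul_mul_adjugate_eq_zero (g : Matrix (Fin n) (Fin n) R)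
    {l : List (Matrix (Fin n) (Fin n) R)} (hl : ∀ M ∈ l, M.IsStrictUpperTriangular)
    (hlen : n ≤ l.length) : (l.map fun M => g * M * g.adjugate).prod = 0 := by
  cases l with
  | nil =>
    obtain rfl : n = 0 := by simpa using hlen
    exact Subsingleton.elim _ _
  | cons N l =>
    rw [list_prod_map_mul_mul_adjugate, list_prod_eq_zero_of_isStrictUpperTriangular hl hlen]
    simp

end Matrix

theorem Matrix.eq_mul_smul_mul_adjugate {R : Type*} [Field R] {n : ℕ}
    {P X N : Matrix (Fin n) (Fin n) R} (hP : P.det ≠ 0) (h : X * P = P * N) :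
    X = P * (P.det⁻¹ • N) * P.adjugate := by
  rw [mul_smul_comm, Matrix.smul_mul, ← h, Matrix.mul_assoc, mul_adjugate, Matrix.mul_smul,
    mul_one, smul_smul, inv_mul_cancel₀ hP, one_smul]

section Triangularization

variable {F V ι : Type*} [Field F] [AddCommGroup V] [Module F V]

theorem exists_linearIndepOn_adapted (W : ℕ → Submodule F V) (hW : Monotone W) (m : ℕ) :
    ∃ B ⊆ (W m : Set V), LinearIndepOn F id B ∧
      ∀ k ≤ m, (W k : Set V) ⊆ span F (B ∩ W k) := by
  induction m with
  | zero =>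
    obtain ⟨B, hBW, -, hWB, hB⟩ :=
      exists_linearIndepOn_id_extension (linearIndepOn_empty F id)
        (Set.empty_subset (W 0 : Set V))
    refine ⟨B, hBW, hB, fun k hk => ?_⟩
    obtain rfl := Nat.le_zero.mp hk
    rwa [Set.inter_eq_left.mpr hBW]
  | succ m ih =>
    obtain ⟨B, hBW, hB, hWB⟩ := ih
    obtain ⟨B', hB'W, hBB', hWB', hB'⟩ :=
      exists_linearIndepOn_id_extension hB (hBW.trans (hW m.le_succ))
    refine ⟨B', hB'W, hB', fun k hk => ?_⟩
    rcases hk.lt_or_eq with hk | rfl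
    · exact (hWB k (Nat.lt_succ_iff.mp hk)).trans
        (span_mono (Set.inter_subset_inter_left _ hBB'))
    · rwa [Set.inter_eq_left.mpr hB'W]

def wordKer (T : ι → Module.End F V) (k : ℕ) : Submodule F V :=
  ⨅ w : Fin k → ι, LinearMap.ker (wordProd T w)

variable (T : ι → Module.End F V)

theorem wordKer_zero : wordKer T 0 = ⊥ := by
  simp [wordKer, wordProd_zero, Module.End.one_eq_id]

theorem wordKer_mono : Monotone (wordKer T) :=
  monotone_nat_of_le_succ fun k x hx => (mem_iInf _).mpr fun w => by
    rw [LinearMap.mem_ker, ← Fin.cons_self_tail w, wordProd_cons, Module.End.mul_apply,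
      LinearMap.mem_ker.mp ((mem_iInf _).mp hx (Fin.tail w)), map_zero]

theorem apply_mem_wordKer (v : ι) {k : ℕ} {x : V} (hx : x ∈ wordKer T (k + 1)) :
    T v x ∈ wordKer T k :=
  (mem_iInf _).mpr fun w => by
    have := LinearMap.mem_ker.mp ((mem_iInf _).mp hx (Fin.snoc w v))
    rwa [wordProd_snoc, Module.End.mul_apply] at this

theorem wordKer_eq_top {L : ℕ} (hT : ∀ w : Fin L → ι, wordProd T w = 0) :
    wordKer T L = ⊤ := by
  simp [wordKer, hT]

theorem exists_fin_equiv_monotone {α : Type*} [Fintype ι] [LinearOrder α] (f : ι → α) :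
    ∃ e : Fin (Fintype.card ι) ≃ ι, Monotone (f ∘ e) :=
  ⟨(Tuple.sort (f ∘ (Fintype.equivFin ι).symm)).trans (Fintype.equivFin ι).symm,
    Tuple.monotone_sort (f ∘ (Fintype.equivFin ι).symm)⟩

theorem exists_basis_apply_mem_span_Iio [FiniteDimensional F V] {L : ℕ}
    (hT : ∀ w : Fin L → ι, wordProd T w = 0) :
    ∃ (n : ℕ) (b : Module.Basis (Fin n) F V),
      ∀ v j, T v (b j) ∈ span F (b '' Set.Iio j) := by
  classical
  obtain ⟨B, -, hB, hWB⟩ := exists_linearIndepOn_adapted (wordKer T) (wordKer_mono T) L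
  have hspan : ⊤ ≤ span F (Set.range ((↑) : B → V)) := by
    rw [Subtype.range_coe, ← wordKer_eq_top T hT]
    exact (hWB L le_rfl).trans (span_mono Set.inter_subset_left)
  let b₀ := Module.Basis.mk hB hspan
  have : Fintype B := FiniteDimensional.fintypeBasisIndex b₀
  have hb₀ : ∀ i, b₀ i = i := Module.Basis.mk_apply hB hspan
  have hL : ∀ x, x ∈ wordKer T L := by simp [wordKer_eq_top T hT]
  have hex : ∀ x : V, ∃ k, x ∈ wordKer T k := fun x => ⟨L, hL x⟩
  let level : V → ℕ := fun x => Nat.find (hex x)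
  have hlevel : ∀ v (i : B), T v i ∈ span F (b₀ '' {j | level j < level i}) := by
    intro v i
    have hi : (i : V) ∈ wordKer T (level i) := Nat.find_spec (hex i)
    obtain ⟨k, hk⟩ : ∃ k, level i = k + 1 := Nat.exists_eq_succ_of_ne_zero fun h0 => by
      rw [h0, wordKer_zero] at hi
      exact hB.ne_zero i.2 hi
    rw [hk] at hi
    refine span_mono ?_ (hWB k ?_ (apply_mem_wordKer T v hi))
    · rintro x ⟨hxB, hxW⟩
      exact ⟨⟨x, hxB⟩, by simpa [hk, Nat.lt_succ_iff] using Nat.find_min' _ hxW, hb₀ _⟩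
    · have : level i ≤ L := Nat.find_min' (hex i) (hL i)
      omega
  -- listing the basis by increasing level makes every `T v` strictly triangular
  obtain ⟨e, he⟩ := exists_fin_equiv_monotone fun i : B => level i
  refine ⟨_, b₀.reindex e.symm, fun v j => ?_⟩
  rw [Module.Basis.reindex_apply, Equiv.symm_symm, hb₀]
  refine span_mono ?_ (hlevel v (e j))
  rintro _ ⟨i, hi, rfl⟩
  obtain ⟨j', rfl⟩ := e.surjective i
  exact ⟨j', he.reflect_lt hi, by simp⟩

end Triangularization

theorem Matrix.exists_mul_eq_mul_isStrictUpperTriangular {R ι : Type*} [Field R] {n L : ℕ}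
    (X : ι → Matrix (Fin n) (Fin n) R) (hX : ∀ w : Fin L → ι, wordProd X w = 0) :
    ∃ P : Matrix (Fin n) (Fin n) R, P.det ≠ 0 ∧ ∃ N : ι → Matrix (Fin n) (Fin n) R,
      (∀ v, (N v).IsStrictUpperTriangular) ∧ ∀ v, X v * P = P * N v := by
  obtain ⟨m, b, hb⟩ :=
    exists_basis_apply_mem_span_Iio (fun v => toLinAlgEquiv' (X v)) (L := L)
    fun w => (map_wordProd toLinAlgEquiv' X w).symm.trans (by rw [hX, map_zero])
  obtain rfl : n = m := by simpa using Module.finrank_eq_card_basis b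
  set P := (Pi.basisFun R (Fin n)).toMatrix b
  have hP : ∀ i j, P i j = b j i := fun i j => by simp [P, Module.Basis.toMatrix_apply]
  refine ⟨P, ?_, fun v => of fun i j => b.repr (X v *ᵥ b j) i,
    fun v i j hji => ?_, fun v => ?_⟩
  · rw [← Module.Basis.det_apply]
    exact ((Module.Basis.is_basis_iff_det _).mp ⟨b.linearIndependent, b.span_eq⟩).ne_zero
  · have hsupp := b.mem_span_image.mp (hb v j)
    exact Finsupp.notMem_support_iff.mp fun hi => (hsupp hi).not_ge hji
  · ext i j
    have hcoord := congrFun (b.sum_repr (X v *ᵥ b j)) i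
    simp only [Finset.sum_apply, Pi.smul_apply, smul_eq_mul] at hcoord
    simp only [mul_apply, hP, of_apply, mul_comm (b _ i), hcoord]
    rfl

section Parametrization

variable {R S ι : Type*} [CommRing R] [CommRing S] {n : ℕ}

def strictUpperOf (c : Fin n → Fin n → R) : Matrix (Fin n) (Fin n) R :=
  of fun i j => if i < j then c i j else 0

theorem isStrictUpperTriangular_strictUpperOf (c : Fin n → Fin n → R) :
    (strictUpperOf c).IsStrictUpperTriangular := fun i j hji => by
  simp [strictUpperOf, hji.not_gt]

theorem Matrix.IsStrictUpperTriangular.strictUpperOf_eq {N : Matrix (Fin n) (Fin n) R}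
    (hN : N.IsStrictUpperTriangular) : strictUpperOf N = N := by
  ext i j
  by_cases hij : i < j
  · simp [strictUpperOf, hij]
  · simp [strictUpperOf, hij, hN i j (not_lt.mp hij)]

def conjParam (p : (Fin n × Fin n) ⊕ (ι × Fin n × Fin n) → R) (v : ι) :
    Matrix (Fin n) (Fin n) R :=
  of (fun i j => p (.inl (i, j))) * strictUpperOf (fun i j => p (.inr (v, i, j))) *
    (of fun i j => p (.inl (i, j))).adjugate

theorem map_conjParam (f : R →+* S) (p : (Fin n × Fin n) ⊕ (ι × Fin n × Fin n) → R)
    (v : ι) :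
    (conjParam p v).map f = conjParam (f ∘ p) v := by
  have hup : (strictUpperOf fun i j => p (.inr (v, i, j))).map f
      = strictUpperOf fun i j => f (p (.inr (v, i, j))) := by
    ext i j
    simp [strictUpperOf, apply_ite f]
  simp only [conjParam, ← RingHom.mapMatrix_apply, map_mul, RingHom.map_adjugate]
  simp only [RingHom.mapMatrix_apply, hup]
  rfl

theorem eval_conjParam_X (x : (Fin n × Fin n) ⊕ (ι × Fin n × Fin n) → R) (v : ι)
    (i j : Fin n) :
    MvPolynomial.eval x (conjParam MvPolynomial.X v i j) = conjParam x v i j := by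
  rw [← map_apply (f := MvPolynomial.eval x), map_conjParam]
  congr
  funext s
  simp

end Parametrization

theorem range_conjParam {R ι : Type*} [Field R] {n L : ℕ} (hL : n ≤ L) :
    Set.range (conjParam (R := R) (ι := ι) (n := n))
      = {X | ∀ w : Fin L → ι, wordProd X w = 0} := by
  ext X
  constructor
  · rintro ⟨p, rfl⟩ w
    let g : Matrix (Fin n) (Fin n) R := of fun i j => p (.inl (i, j))
    have hword : (List.ofFn fun j => conjParam p (w j)) =
        (List.ofFn fun j => strictUpperOf fun a b => p (.inr (w j, a, b))).map
          fun M => g * M * g.adjugate := by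
      rw [List.map_ofFn]
      rfl
    rw [wordProd, hword]
    exact list_prod_map_mul_mul_adjugate_eq_zero g
      (by simp [isStrictUpperTriangular_strictUpperOf]) (by simpa using hL)
  · intro hX
    obtain ⟨P, hP, N, hN, hXPN⟩ := exists_mul_eq_mul_isStrictUpperTriangular X hX
    refine ⟨Sum.elim (fun ij => P ij.1 ij.2) (fun t => (P.det⁻¹ • N t.1) t.2.1 t.2.2), ?_⟩
    funext v
    rw [eq_mul_smul_mul_adjugate hP (hXPN v), conjParam]
    simp only [Sum.elim_inl, Sum.elim_inr]
    rw [((hN v).smul _).strictUpperOf_eq]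
    rfl

noncomputable def genericMatrix {R : Type*} [CommSemiring R] {m n : ℕ} (v : Fin m) :
    Matrix (Fin n) (Fin n) (MvPolynomial (Fin m × Fin n × Fin n) R) :=
  of fun i j => MvPolynomial.X (v, i, j)

theorem wordProd_genericMatrix_map_eval {R : Type*} [CommSemiring R] {m n k : ℕ}
    (X : Fin m → Matrix (Fin n) (Fin n) R) (w : Fin k → Fin m) :
    (wordProd genericMatrix w).map (MvPolynomial.eval fun t => X t.1 t.2.1 t.2.2) =
      wordProd X w := by
  rw [← RingHom.mapMatrix_apply, map_wordProd]
  congr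
  ext v i j
  simp [genericMatrix]

theorem zClosed_setOf_wordProd_eq_zero (L : ℕ) :
    ZClosed K r d {X | ∀ w : Fin L → Fin r, wordProd X w = 0} := by
  refine ⟨Set.range fun a : (Fin L → Fin r) × Fin d × Fin d =>
    wordProd genericMatrix a.1 a.2.1 a.2.2, ?_⟩
  ext X
  simp only [Set.mem_ofPred_eq, Set.forall_mem_range, Prod.forall]
  refine forall_congr' fun w => ?_
  rw [← wordProd_genericMatrix_map_eval X w]
  exact ⟨fun h i j => congrFun₂ h i j, fun h => Matrix.ext h⟩

theorem zIrred_range_of_eval [Infinite K] {σ : Type*}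
    (φ : (σ → K) → Fin r → Matrix (Fin d) (Fin d) K)
    (q : Fin r × Fin d × Fin d → MvPolynomial σ K)
    (hφ : ∀ x v i j, φ x v i j = MvPolynomial.eval x (q (v, i, j))) :
    ZIrred K r d (Set.range φ) := by
  refine ⟨Set.range_nonempty φ, ?_⟩
  rintro C₁ C₂ ⟨I₁, rfl⟩ ⟨I₂, rfl⟩ hcover
  have hpull : ∀ x f, MvPolynomial.eval x (MvPolynomial.bind₁ q f)
      = MvPolynomial.eval (fun t => φ x t.1 t.2.1 t.2.2) f := by
    intro x f
    simp only [hφ]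
    exact MvPolynomial.aeval_bind₁ x q f
  by_contra! h
  obtain ⟨_, ⟨x₁, rfl⟩, hx₁⟩ := Set.not_subset.mp h.1
  obtain ⟨_, ⟨x₂, rfl⟩, hx₂⟩ := Set.not_subset.mp h.2
  simp only [Set.mem_ofPred_eq, not_forall] at hx₁ hx₂
  obtain ⟨f₁, hf₁, hx₁⟩ := hx₁
  obtain ⟨f₂, hf₂, hx₂⟩ := hx₂
  have hprod : MvPolynomial.bind₁ q f₁ * MvPolynomial.bind₁ q f₂ = 0 :=
    MvPolynomial.funext fun x => by
      rcases hcover ⟨x, rfl⟩ with h | h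
      · simp [hpull, h f₁ hf₁]
      · simp [hpull, h f₂ hf₂]
  rcases mul_eq_zero.mp hprod with h | h
  · exact hx₁ (by rw [← hpull, h, map_zero])
  · exact hx₂ (by rw [← hpull, h, map_zero])

theorem rep_local_irreducible_of_le
    [IsAlgClosed K] (L : ℕ) (hL : d ≤ L) :
    ZClosed K r d
        {X : Fin r → Matrix (Fin d) (Fin d) K |
          ∀ w : Fin L → Fin r, (List.ofFn fun j => X (w j)).prod = 0} ∧
    ZIrred K r d
        {X : Fin r → Matrix (Fin d) (Fin d) K |
          ∀ w : Fin L → Fin r, (List.ofFn fun j => X (w j)).prod = 0} := by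
  refine ⟨zClosed_setOf_wordProd_eq_zero K r d L, ?_⟩
  change ZIrred K r d {X | ∀ w : Fin L → Fin r, wordProd X w = 0}
  rw [← range_conjParam hL]
  exact zIrred_range_of_eval K r d _ (fun t => conjParam MvPolynomial.X t.1 t.2.1 t.2.2)
    fun x v i j => (eval_conjParam_X x v i j).symm
end

section
/- Let Q be the quiver with one vertex and r ≥ 2 loops, d ∈ ℕ, L < d, and let S = (S_0, …, S_{L−1}) be a sequence of nonnegative integers summing to d with all S_l > 0 for l < the Loewy length of S. If dim S_l ≤ r · dim S_{l−1} and dim S_{l−1} ≤ r · dim S_l for all 1 ≤ l ≤ L−1 with S_l ≠ 0, then S is realizable as the radical layering of some d-dimensional Λ_L-module, i.e., there exists an r-tuple of d×d matrices (X_1, …, X_r) with all length-L products zero, whose generated nilpotent ideal filtration has layer dimensions (S_0, …, S_{L−1}). -/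
/-!
Take a basis of `K^d` split into consecutive layers of sizes `S 0, …, S (L-1)`, and let the
loop `X i` send the `p`-th basis vector of layer `k` to the `(i * S k + p)`-th one of layer `k+1`
(to `0` if there is none). Because `S (k+1) ≤ r * S k`, the images of layer `k` under the `r`
loops exhaust layer `k+1`, so `J^l M` is exactly the span of the layers `≥ l`: the radical
layering is `S`, and `J^L M = 0` kills every product of `L` loops.
-/

/-- The radical filtration `J^l M` of the `d`-dimensional module `M = K^d` over the local
truncated path algebra determined by the matrices `X_1, …, X_r`:
`W 0 = M` and `W (l+1) = Σ_i X_i (W l)`. -/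
def radW {K : Type} [Field K] {r d : ℕ} (X : Fin r → Matrix (Fin d) (Fin d) K) :
    ℕ → Submodule K (Fin d → K)
  | 0 => ⊤
  | l + 1 => ⨆ i : Fin r, (radW X l).map (X i).mulVecLin

open Finset Matrix

section RadicalFiltration

variable {K : Type} [Field K] {r d : ℕ}

def vanishingBelow (K : Type) [Field K] {d : ℕ} (h : Fin d → ℕ) (l : ℕ) :
    Submodule K (Fin d → K) :=
  ⨅ v ∈ {v | h v < l}, LinearMap.ker (LinearMap.proj v)

lemma mem_vanishingBelow {h : Fin d → ℕ} {l : ℕ} {x : Fin d → K} :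
    x ∈ vanishingBelow K h l ↔ ∀ v, h v < l → x v = 0 := by
  simp [vanishingBelow]

lemma vanishingBelow_eq_bot {h : Fin d → ℕ} {l : ℕ} (hl : ∀ v, h v < l) :
    vanishingBelow K h l = ⊥ := by
  ext x
  simp only [mem_vanishingBelow, Submodule.mem_bot, funext_iff]
  exact ⟨fun hx v => hx v (hl v), fun hx v _ => hx v⟩

lemma finrank_vanishingBelow (h : Fin d → ℕ) (l : ℕ) :
    Module.finrank K (vanishingBelow K h l) = #{v | l ≤ h v} := by
  classical
  let e := LinearMap.iInfKerProjEquiv K (fun _ : Fin d => K) (I := {v | l ≤ h v})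
    (J := {v | h v < l}) (Set.disjoint_left.2 fun v (h1 : l ≤ h v) => not_lt.2 h1)
    (fun v _ => by simp [le_or_gt])
  rw [vanishingBelow, e.finrank_eq, Module.finrank_fintype_fun_eq_card, Fintype.card_subtype]
  rfl

lemma finrank_vanishingBelow_sub_succ (h : Fin d → ℕ) (l : ℕ) :
    Module.finrank K (vanishingBelow K h l) - Module.finrank K (vanishingBelow K h (l + 1)) =
      #{v | h v = l} := by
  have hsplit : #{v | l ≤ h v} = #{v | l + 1 ≤ h v} + #{v | h v = l} := by
    rw [← card_union_of_disjoint (disjoint_filter.2 fun v _ h1 h2 => by omega), ← filter_or]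
    congr 1
    ext v
    simp only [mem_filter, mem_univ, true_and]
    omega
  rw [finrank_vanishingBelow, finrank_vanishingBelow, hsplit, Nat.add_sub_cancel_left]

variable (X : Fin r → Matrix (Fin d) (Fin d) K)

lemma range_mulVecLin_prod_le_radW :
    ∀ {n : ℕ} (w : Fin n → Fin r),
      LinearMap.range (List.ofFn fun j => X (w j)).prod.mulVecLin ≤ radW X n
  | 0, _ => le_top
  | n + 1, w => by
    rw [List.ofFn_succ, List.prod_cons, Matrix.mulVecLin_mul, LinearMap.range_comp]
    exact (Submodule.map_mono (range_mulVecLin_prod_le_radW (Fin.tail w))).trans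
      (le_iSup (fun i => (radW X n).map (X i).mulVecLin) (w 0))

lemma prod_eq_zero_of_radW_eq_bot {n : ℕ} (hn : radW X n = ⊥) (w : Fin n → Fin r) :
    (List.ofFn fun j => X (w j)).prod = 0 := by
  have hrange := range_mulVecLin_prod_le_radW X w
  rw [hn, le_bot_iff, LinearMap.range_eq_bot] at hrange
  ext a b
  simpa using congrFun (LinearMap.congr_fun hrange (Pi.single b 1)) a

variable {X} {h : Fin d → ℕ}

lemma map_vanishingBelow_le (hstep : ∀ i w v, X i w v ≠ 0 → h w = h v + 1) (i : Fin r)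
    (l : ℕ) : (vanishingBelow K h l).map (X i).mulVecLin ≤ vanishingBelow K h (l + 1) := by
  rintro _ ⟨x, hx, rfl⟩
  rw [SetLike.mem_coe, mem_vanishingBelow] at hx
  rw [mem_vanishingBelow]
  intro w hw
  change ∑ v, X i w v * x v = 0
  refine Finset.sum_eq_zero fun v _ => ?_
  by_cases hwv : X i w v = 0
  · rw [hwv, zero_mul]
  · rw [hx v (by have := hstep i w v hwv; omega), mul_zero]

lemma vanishingBelow_succ_le (hstep : ∀ i w v, X i w v ≠ 0 → h w = h v + 1)
    (hsurj : ∀ w, 0 < h w → ∃ i v, X i *ᵥ Pi.single v 1 = Pi.single w 1) (l : ℕ) :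
    vanishingBelow K h (l + 1) ≤ ⨆ i, (vanishingBelow K h l).map (X i).mulVecLin := by
  intro x hx
  rw [mem_vanishingBelow] at hx
  rw [pi_eq_sum_univ' x]
  refine Submodule.sum_mem _ fun w _ => ?_
  rcases lt_or_ge (h w) (l + 1) with hw | hw
  · simp [hx w hw]
  obtain ⟨i, v, hiv⟩ := hsurj w (by omega)
  have hXwv : X i w v = 1 := by simpa using congrFun hiv w
  have hvw : h w = h v + 1 := hstep i w v (by rw [hXwv]; exact one_ne_zero)
  have hv : Pi.single v 1 ∈ vanishingBelow K h l :=
    mem_vanishingBelow.2 fun u hu => Pi.single_eq_of_ne (by rintro rfl; omega) 1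
  exact Submodule.smul_mem _ _ (Submodule.mem_iSup_of_mem i ⟨_, hv, hiv⟩)

theorem radW_eq_vanishingBelow (hstep : ∀ i w v, X i w v ≠ 0 → h w = h v + 1)
    (hsurj : ∀ w, 0 < h w → ∃ i v, X i *ᵥ Pi.single v 1 = Pi.single w 1) :
    ∀ l, radW X l = vanishingBelow K h l
  | 0 => by ext; simp [radW, mem_vanishingBelow]
  | l + 1 => by
    rw [radW, radW_eq_vanishingBelow hstep hsurj l]
    exact le_antisymm (iSup_le (map_vanishingBelow_le hstep · l))
      (vanishingBelow_succ_le hstep hsurj l)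

end RadicalFiltration

namespace LayeredShift

variable (S : ℕ → ℕ) (L : ℕ) {r : ℕ}

def shift (i : Fin r) (x : Σ k : Fin L, Fin (S k)) : Option (Σ k : Fin L, Fin (S k)) :=
  if hx : (x.1 : ℕ) + 1 < L ∧ (i : ℕ) * S x.1 + x.2 < S (x.1 + 1) then
    some ⟨⟨x.1 + 1, hx.1⟩, ⟨i * S x.1 + x.2, hx.2⟩⟩
  else none

variable {S L}

lemma layer_eq_of_shift_eq_some {i : Fin r} {x y : Σ k : Fin L, Fin (S k)}
    (hxy : shift S L i x = some y) : (y.1 : ℕ) = x.1 + 1 := by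
  unfold shift at hxy
  split_ifs at hxy
  cases hxy
  rfl

lemma exists_shift_eq_some (hgrowth : ∀ k, k + 1 < L → 0 < S (k + 1) → S (k + 1) ≤ r * S k)
    (y : Σ k : Fin L, Fin (S k)) (hy : 0 < (y.1 : ℕ)) :
    ∃ (i : Fin r) (x : Σ k : Fin L, Fin (S k)), shift S L i x = some y := by
  obtain ⟨⟨_ | k, hkL⟩, q⟩ := y
  · exact absurd hy (lt_irrefl 0)
  have hq : (q : ℕ) < S (k + 1) := q.2
  have hgrow := hgrowth k hkL (by omega)
  have hSk : 0 < S k := Nat.pos_of_ne_zero fun h0 => by rw [h0, mul_zero] at hgrow; omega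
  have hi : q / S k < r := (Nat.div_lt_iff_lt_mul hSk).2 (by omega)
  refine ⟨⟨q / S k, hi⟩, ⟨⟨k, by omega⟩, ⟨q % S k, Nat.mod_lt _ hSk⟩⟩, ?_⟩
  have hdiv : q / S k * S k + q % S k = q := Nat.div_add_mod' q (S k)
  rw [shift, dif_pos ⟨hkL, by simp only; omega⟩]
  simp only [Option.some.injEq, Sigma.mk.injEq, true_and]
  exact heq_of_eq (Fin.ext hdiv)

variable {d : ℕ}

def shiftMatrix (K : Type) [Field K] (e : Fin d ≃ Σ k : Fin L, Fin (S k)) (i : Fin r) :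
    Matrix (Fin d) (Fin d) K :=
  Matrix.of fun w v => if shift S L i (e v) = some (e w) then 1 else 0

variable {K : Type} [Field K] (e : Fin d ≃ Σ k : Fin L, Fin (S k))

lemma layer_eq_of_shiftMatrix_ne_zero {i : Fin r} {w v : Fin d}
    (hwv : shiftMatrix K e i w v ≠ 0) : ((e w).1 : ℕ) = (e v).1 + 1 := by
  by_contra hne
  exact hwv (if_neg fun hs => hne (layer_eq_of_shift_eq_some hs))

lemma shiftMatrix_mulVec_single {i : Fin r} {w v : Fin d} (hs : shift S L i (e v) = some (e w)) :
    shiftMatrix K e i *ᵥ Pi.single v 1 = Pi.single w 1 := by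
  ext u
  simp [shiftMatrix, hs, Pi.single_apply, eq_comm]

lemma card_layer_eq {l : ℕ} (hl : l < L) : #{v : Fin d | ((e v).1 : ℕ) = l} = S l := by
  rw [← Fintype.card_subtype]
  calc Fintype.card {v // ((e v).1 : ℕ) = l}
      = Fintype.card {x : Σ k : Fin L, Fin (S k) // x.1 = ⟨l, hl⟩} :=
        Fintype.card_congr (e.subtypeEquiv fun v => by simp [Fin.ext_iff])
    _ = S l := by rw [Fintype.card_congr (Equiv.sigmaSubtype _), Fintype.card_fin]

end LayeredShift

open LayeredShift in
theorem realizable_radical_layering_local_general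
    (K : Type) [Field K] (r d L : ℕ)
    (S : ℕ → ℕ) (hsum : (∑ l ∈ Finset.range L, S l) = d)
    (hcond : ∀ l, 1 ≤ l → l ≤ L - 1 → S l ≠ 0 →
      S l ≤ r * S (l - 1) ∧ S (l - 1) ≤ r * S l) :
    ∃ X : Fin r → Matrix (Fin d) (Fin d) K,
      (∀ w : Fin L → Fin r, (List.ofFn fun j => X (w j)).prod = 0) ∧
      ∀ l, l < L →
        Module.finrank K (radW X l) - Module.finrank K (radW X (l + 1)) = S l := by
  have hcard : Fintype.card (Σ k : Fin L, Fin (S k)) = d := by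
    simp [Fin.sum_univ_eq_sum_range, hsum]
  let e := (Fintype.equivFinOfCardEq hcard).symm
  have hgrowth : ∀ k, k + 1 < L → 0 < S (k + 1) → S (k + 1) ≤ r * S k := fun k hk hS =>
    (hcond (k + 1) (by omega) (by omega) hS.ne').1
  have hrad : ∀ l, radW (shiftMatrix K e) l = vanishingBelow K (fun v => (e v).1) l :=
    radW_eq_vanishingBelow (fun _ _ _ => layer_eq_of_shiftMatrix_ne_zero e) fun w hw => by
      obtain ⟨i, x, hs⟩ := exists_shift_eq_some hgrowth (e w) hw
      exact ⟨i, e.symm x, shiftMatrix_mulVec_single e (by simpa using hs)⟩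
  refine ⟨shiftMatrix K e, prod_eq_zero_of_radW_eq_bot _ ?_, fun l hl => ?_⟩
  · exact (hrad L).trans (vanishingBelow_eq_bot fun v => (e v).1.2)
  · rw [hrad, hrad, finrank_vanishingBelow_sub_succ, card_layer_eq e hl]

/-- Let `Q` be the quiver with one vertex and `r ≥ 2` loops, `L < d`, and
let `S = (S_0, …, S_{L-1})` be a sequence of nonnegative integers summing to `d` whose nonzero
entries form an initial segment. If `S_l ≤ r·S_{l-1}` and `S_{l-1} ≤ r·S_l` for all
`1 ≤ l ≤ L-1` with `S_l ≠ 0`, then `S` is realizable as the radical layering of a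
`d`-dimensional `Λ_L`-module: there are `d×d` matrices `X_1, …, X_r` over `K` with all
products of `L` of them zero, whose radical filtration has layer dimensions `(S_0, …, S_{L-1})`. -/
theorem realizable_radical_layering_local
    (K : Type) [Field K] [IsAlgClosed K] (r d L : ℕ) (hr : 2 ≤ r) (hL : L < d)
    (S : ℕ → ℕ) (hsupp : ∀ l, L ≤ l → S l = 0) (hsum : (∑ l ∈ Finset.range L, S l) = d)
    (hseg : ∃ m : ℕ, m ≤ L ∧ (∀ l, l < m → 0 < S l) ∧ ∀ l, m ≤ l → S l = 0)
    (hcond : ∀ l, 1 ≤ l → l ≤ L - 1 → S l ≠ 0 →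
      S l ≤ r * S (l - 1) ∧ S (l - 1) ≤ r * S l) :
    ∃ X : Fin r → Matrix (Fin d) (Fin d) K,
      (∀ w : Fin L → Fin r, (List.ofFn fun j => X (w j)).prod = 0) ∧
      ∀ l, l < L →
        Module.finrank K (radW X l) - Module.finrank K (radW X (l + 1)) = S l :=
  realizable_radical_layering_local_general K r d L S hsum hcond
end
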